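/- In the multi-target detection model, there exist absolute constants C₁, C₂ > 0 such that for every 0 ≤ l ≤ L−1 the second-order autocorrelation of the noisy measurement satisfies Var(a_y²[l]) ≤ C₁ M ‖x‖₂² σ² / N² + C₂ σ⁴ / N. In particular, if M/N stays bounded, Var(a_y²[l]) = O((σ² + σ⁴)/N). -/

import Mathlib

open MeasureTheory ProbabilityTheory

/-- The sequence `z` of length `m`, zero-padded to all of `ℤ`. -/
noncomputable def zpad (m : ℕ) (z : ℕ → ℝ) : ℤ → ℝ :=
  fun i => if 0 ≤ i ∧ i < (m : ℤ) then z i.toNat else 0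

/-- The (zero-padded) linear convolution `s∗x` of the binary sequence `s` with the signal `x`
of length `L`, where `s` has `M` nonzero entries at the positions `p 0 < p 1 < ⋯ < p (M−1)`:
`(s∗x)[i] = Σ_k x[i − p k]`, with `x` extended by zero. -/
noncomputable def sconv (L M : ℕ) (x : ℕ → ℝ) (p : Fin M → ℕ) : ℤ → ℝ :=
  fun i => ∑ k : Fin M, zpad L x (i - (p k : ℤ))

/-- The noise realization `ε(ω)`, zero-padded to all of `ℤ`. -/
noncomputable def epad {Ω : Type*} (N : ℕ) (ε : Fin N → Ω → ℝ) (ω : Ω) : ℤ → ℝ :=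
  fun i => if h : 0 ≤ i ∧ i < (N : ℤ) then ε ⟨i.toNat, by omega⟩ ω else 0

/-!
Write `y = c + e` with `c = s∗x` deterministic and `e` the zero-padded noise. Then
`Σ_i y_i y_{i+l}` is a constant, plus the linear forms `Σ_i c_{i+l} e_i` and `Σ_i c_i e_{i+l}`,
plus the quadratic form `Σ_i e_i e_{i+l}`. A linear form in independent noise has variance
`σ² Σ_i c_i²`, and `Σ_i c_i² ≤ M ‖x‖²` because the `M` shifted copies of `x` in `c` do not
overlap. Each product `e_i e_{i+l}` has variance at most `E e⁴ = 3σ⁴`; sorting the indices `i`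
by the parity of `⌊i / l⌋` splits the quadratic form into two sums of pairwise independent
products, so its variance is `O(N σ⁴)`. The pieces are combined with
`Var (X + Y) ≤ 2 Var X + 2 Var Y`, which gives `C₁ = 8` and `C₂ = 12`.
-/

open scoped NNReal ENNReal

lemma sq_mul_le_half_add_pow_four (y z : ℝ) : (y * z) ^ 2 ≤ (y ^ 4 + z ^ 4) / 2 := by
  nlinarith [sq_nonneg (y ^ 2 - z ^ 2)]

lemma ne_add_of_even_div_iff {i j l : ℕ} (hij : i ≠ j) (h : Even (i / l) ↔ Even (j / l)) :
    i ≠ j + l := by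
  rintro rfl
  rcases Nat.eq_zero_or_pos l with rfl | hl
  · exact hij rfl
  · rw [Nat.add_div_right _ hl, Nat.even_add_one] at h
    exact not_iff_self h

section GaussianMoments

lemma deriv_mul_exp_half_sq (v : ℝ) {f g : ℝ → ℝ} (hf : Differentiable ℝ f)
    (hg : ∀ t, deriv f t + f t * (v * t) = g t) :
    deriv (fun t => f t * Real.exp (v * t ^ 2 / 2))
      = fun t => g t * Real.exp (v * t ^ 2 / 2) := by
  ext t
  have h : HasDerivAt (fun t => v * t ^ 2 / 2) (v * t) t :=
    (((hasDerivAt_pow 2 t).const_mul v).div_const 2).congr_deriv (by ring)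
  exact (((hf t).hasDerivAt.mul h.exp).congr_deriv (by rw [← hg]; ring)).deriv

/-- The fourth moment is the fourth derivative at `0` of the moment generating function
`t ↦ exp (v t² / 2)`. -/
lemma integral_pow_four_gaussianReal (v : ℝ≥0) :
    ∫ x, x ^ 4 ∂gaussianReal 0 v = 3 * (v : ℝ) ^ 2 := by
  set a : ℝ := (v : ℝ)
  have hmgf := iteratedDeriv_mgf_zero (X := fun x : ℝ => x) (μ := gaussianReal 0 v) (by simp) 4
  simp only [mgf_fun_id_gaussianReal, zero_mul, zero_add, iteratedDeriv_eq_iterate] at hmgf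
  have e : (fun t => Real.exp (a * t ^ 2 / 2)) = fun t => 1 * Real.exp (a * t ^ 2 / 2) := by
    simp
  rw [e, Function.iterate_succ_apply, Function.iterate_succ_apply, Function.iterate_succ_apply,
    Function.iterate_one,
    deriv_mul_exp_half_sq a (f := fun _ => 1) (g := fun t => a * t) (by fun_prop)
      (fun t => by simp),
    deriv_mul_exp_half_sq a (f := fun t => a * t) (g := fun t => a + a ^ 2 * t ^ 2)
      (by fun_prop) (fun t => by simp; ring),
    deriv_mul_exp_half_sq a (f := fun t => a + a ^ 2 * t ^ 2)
      (g := fun t => 3 * a ^ 2 * t + a ^ 3 * t ^ 3) (by fun_prop) (fun t => by simp; ring),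
    deriv_mul_exp_half_sq a (f := fun t => 3 * a ^ 2 * t + a ^ 3 * t ^ 3)
      (g := fun t => 3 * a ^ 2 + 6 * a ^ 3 * t ^ 2 + a ^ 4 * t ^ 4) (by fun_prop)
      (fun t => by rw [deriv_fun_add (by fun_prop) (by fun_prop)]; simp; ring)] at hmgf
  simpa using hmgf.symm

variable {Ω : Type*} [MeasurableSpace Ω] {P : Measure Ω} {X : Ω → ℝ} {m : ℝ} {v : ℝ≥0}

lemma memLp_of_map_eq_gaussianReal (hX : AEMeasurable X P) (h : P.map X = gaussianReal m v)
    {p : ℝ≥0∞} (hp : p ≠ ∞) : MemLp X p P := by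
  rw [← Function.id_comp X, ← memLp_map_measure_iff (by fun_prop) hX, h]
  exact memLp_id_gaussianReal' p hp

lemma variance_of_map_eq_gaussianReal (hX : AEMeasurable X P)
    (h : P.map X = gaussianReal m v) : Var[X; P] = v := by
  rw [← variance_id_map hX, h, variance_id_gaussianReal]

lemma integral_pow_four_of_map_eq_gaussianReal (hX : AEMeasurable X P)
    (h : P.map X = gaussianReal 0 v) : ∫ ω, X ω ^ 4 ∂P = 3 * (v : ℝ) ^ 2 := by
  rw [← integral_pow_four_gaussianReal v, ← h, integral_map hX (by fun_prop)]

end GaussianMoments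

section Variance

variable {Ω : Type*} [MeasurableSpace Ω] {μ : Measure Ω}

lemma variance_add_le [IsFiniteMeasure μ] {X Y : Ω → ℝ} (hX : MemLp X 2 μ) (hY : MemLp Y 2 μ) :
    Var[X + Y; μ] ≤ 2 * Var[X; μ] + 2 * Var[Y; μ] := by
  have hsum := variance_add hX hY
  have hdiff := variance_sub hX hY
  have := variance_nonneg (X - Y) μ
  linarith

lemma variance_sum_le_card_mul {ι : Type*} {Z : ι → Ω → ℝ} {s : Finset ι} {c : ℝ}
    (hZ : ∀ i ∈ s, MemLp (Z i) 2 μ) (hindep : Set.Pairwise s fun i j => Z i ⟂ᵢ[μ] Z j)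
    (hc : ∀ i ∈ s, Var[Z i; μ] ≤ c) :
    Var[∑ i ∈ s, Z i; μ] ≤ s.card * c := by
  rw [IndepFun.variance_sum hZ hindep, ← nsmul_eq_mul]
  exact Finset.sum_le_card_nsmul s _ c hc

end Variance

structure IsIIDGaussian {Ω ι : Type*} [MeasurableSpace Ω] (P : Measure Ω) (ε : ι → Ω → ℝ)
    (v : ℝ≥0) : Prop where
  measurable : ∀ i, Measurable (ε i)
  indep : iIndepFun ε P
  map_eq : ∀ i, P.map (ε i) = gaussianReal 0 v

section PaddedNoise

variable {Ω : Type*} {N : ℕ} {ε : Fin N → Ω → ℝ}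

lemma epad_eq_or (i : ℤ) :
    (∃ j : Fin N, (j : ℤ) = i ∧ ∀ ω, epad N ε ω i = ε j ω) ∨ ∀ ω, epad N ε ω i = 0 := by
  by_cases h : 0 ≤ i ∧ i < N
  · exact .inl ⟨⟨i.toNat, by omega⟩, by simp [h.1], fun ω => by simp [epad, h]⟩
  · exact .inr fun ω => by simp [epad, h]

variable [MeasurableSpace Ω] {P : Measure Ω} {v : ℝ≥0}

namespace IsIIDGaussian

lemma isProbabilityMeasure (hε : IsIIDGaussian P ε v) : IsProbabilityMeasure P :=
  hε.indep.isProbabilityMeasure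

lemma memLp_epad (hε : IsIIDGaussian P ε v) (i : ℤ) {p : ℝ≥0∞} (hp : p ≠ ∞) :
    MemLp (fun ω => epad N ε ω i) p P := by
  rcases epad_eq_or (ε := ε) i with ⟨j, -, hj⟩ | h0
  · simpa only [hj] using
      memLp_of_map_eq_gaussianReal (hε.measurable j).aemeasurable (hε.map_eq j) hp
  · simp only [h0]
    exact MemLp.zero'

lemma variance_epad_le (hε : IsIIDGaussian P ε v) (i : ℤ) :
    Var[fun ω => epad N ε ω i; P] ≤ v := by
  rcases epad_eq_or (ε := ε) i with ⟨j, -, hj⟩ | h0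
  · simp only [hj]
    exact (variance_of_map_eq_gaussianReal (hε.measurable j).aemeasurable (hε.map_eq j)).le
  · simp only [h0]
    exact (variance_zero P).trans_le v.2

lemma integrable_epad_pow_four (hε : IsIIDGaussian P ε v) (i : ℤ) :
    Integrable (fun ω => epad N ε ω i ^ 4) P :=
  have := hε.isProbabilityMeasure
  ((hε.memLp_epad i (p := (4 : ℕ)) (by simp)).integrable_norm_pow' ).congr
    (.of_forall fun ω => by simp [Even.pow_abs ⟨2, rfl⟩])

lemma integral_epad_pow_four_le (hε : IsIIDGaussian P ε v) (i : ℤ) :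
    ∫ ω, epad N ε ω i ^ 4 ∂P ≤ 3 * (v : ℝ) ^ 2 := by
  rcases epad_eq_or (ε := ε) i with ⟨j, -, hj⟩ | h0
  · simp only [hj]
    exact (integral_pow_four_of_map_eq_gaussianReal (hε.measurable j).aemeasurable
      (hε.map_eq j)).le
  · simp only [h0]
    simp

lemma indepFun_epad (hε : IsIIDGaussian P ε v) {i j : ℤ} (hij : i ≠ j) :
    (fun ω => epad N ε ω i) ⟂ᵢ[P] (fun ω => epad N ε ω j) := by
  have := hε.isProbabilityMeasure
  rcases epad_eq_or (ε := ε) i with ⟨i', rfl, hi⟩ | hi <;>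
    rcases epad_eq_or (ε := ε) j with ⟨j', rfl, hj⟩ | hj <;> simp only [hi, hj]
  · exact hε.indep.indepFun (fun h => hij (h ▸ rfl))
  all_goals first | exact indepFun_const_left _ _ | exact indepFun_const_right _ _

lemma indepFun_epad_mul_epad (hε : IsIIDGaussian P ε v) {a b c d : ℤ} (hac : a ≠ c)
    (had : a ≠ d) (hbc : b ≠ c) (hbd : b ≠ d) :
    (fun ω => epad N ε ω a * epad N ε ω b) ⟂ᵢ[P] (fun ω => epad N ε ω c * epad N ε ω d) := by
  have := hε.isProbabilityMeasure
  rcases epad_eq_or (ε := ε) a with ⟨a', rfl, ha⟩ | ha <;>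
    rcases epad_eq_or (ε := ε) b with ⟨b', rfl, hb⟩ | hb <;>
    rcases epad_eq_or (ε := ε) c with ⟨c', rfl, hc⟩ | hc <;>
    rcases epad_eq_or (ε := ε) d with ⟨d', rfl, hd⟩ | hd <;>
    simp only [ha, hb, hc, hd, zero_mul, mul_zero]
  · exact hε.indep.indepFun_mul_mul hε.measurable a' b' c' d' (fun h => hac (h ▸ rfl))
      (fun h => had (h ▸ rfl)) (fun h => hbc (h ▸ rfl)) (fun h => hbd (h ▸ rfl))
  all_goals first | exact indepFun_const_left _ _ | exact indepFun_const_right _ _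

lemma aestronglyMeasurable_epad_mul_epad (hε : IsIIDGaussian P ε v) (a b : ℤ) :
    AEStronglyMeasurable (fun ω => epad N ε ω a * epad N ε ω b) P :=
  (hε.memLp_epad a (p := 1) (by simp)).aestronglyMeasurable.mul
    (hε.memLp_epad b (p := 1) (by simp)).aestronglyMeasurable

lemma memLp_epad_mul_epad (hε : IsIIDGaussian P ε v) (a b : ℤ) :
    MemLp (fun ω => epad N ε ω a * epad N ε ω b) 2 P := by
  refine (memLp_two_iff_integrable_sq (hε.aestronglyMeasurable_epad_mul_epad a b)).2 ?_
  refine Integrable.mono' (((hε.integrable_epad_pow_four a).add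
    (hε.integrable_epad_pow_four b)).div_const 2)
    ((hε.aestronglyMeasurable_epad_mul_epad a b).pow 2) (.of_forall fun ω => ?_)
  rw [Real.norm_of_nonneg (sq_nonneg _)]
  exact sq_mul_le_half_add_pow_four _ _

lemma variance_epad_mul_epad_le (hε : IsIIDGaussian P ε v) (a b : ℤ) :
    Var[fun ω => epad N ε ω a * epad N ε ω b; P] ≤ 3 * (v : ℝ) ^ 2 := by
  have := hε.isProbabilityMeasure
  have ha := hε.integrable_epad_pow_four a
  have hb := hε.integrable_epad_pow_four b
  calc Var[fun ω => epad N ε ω a * epad N ε ω b; P]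
      ≤ ∫ ω, (epad N ε ω a * epad N ε ω b) ^ 2 ∂P :=
        variance_le_expectation_sq (hε.aestronglyMeasurable_epad_mul_epad a b)
    _ ≤ ∫ ω, (epad N ε ω a ^ 4 + epad N ε ω b ^ 4) / 2 ∂P :=
        integral_mono_of_nonneg (.of_forall fun ω => sq_nonneg _) ((ha.add hb).div_const 2)
          (.of_forall fun ω => sq_mul_le_half_add_pow_four _ _)
    _ = ((∫ ω, epad N ε ω a ^ 4 ∂P) + ∫ ω, epad N ε ω b ^ 4 ∂P) / 2 := by
        rw [integral_div, integral_add ha hb]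
    _ ≤ 3 * (v : ℝ) ^ 2 := by
        linarith [hε.integral_epad_pow_four_le a, hε.integral_epad_pow_four_le b]

lemma variance_sum_mul_epad_le (hε : IsIIDGaussian P ε v) (b : ℕ → ℝ) {f : ℕ → ℤ}
    (hf : f.Injective) (s : Finset ℕ) :
    Var[fun ω => ∑ i ∈ s, b i * epad N ε ω (f i); P] ≤ v * ∑ i ∈ s, b i ^ 2 := by
  have hsum : (fun ω => ∑ i ∈ s, b i * epad N ε ω (f i))
      = ∑ i ∈ s, fun ω => b i * epad N ε ω (f i) := by
    ext ω
    simp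
  rw [hsum, IndepFun.variance_sum (fun i _ => (hε.memLp_epad (f i) (by simp)).const_mul (b i))
    fun i _ j _ hij => (hε.indepFun_epad (hf.ne hij)).comp (measurable_const_mul (b i))
      (measurable_const_mul (b j)), Finset.mul_sum]
  refine Finset.sum_le_sum fun i _ => ?_
  rw [variance_const_mul, mul_comm]
  exact mul_le_mul_of_nonneg_right (hε.variance_epad_le (f i)) (sq_nonneg _)

lemma variance_sum_epad_mul_epad_le_of_pairwise (hε : IsIIDGaussian P ε v) {l : ℕ}
    {s : Finset ℕ} (hs : (s : Set ℕ).Pairwise fun i j => i ≠ j + l) :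
    Var[∑ i ∈ s, fun ω => epad N ε ω i * epad N ε ω (i + l); P] ≤ s.card * (3 * (v : ℝ) ^ 2) :=
  variance_sum_le_card_mul (fun i _ => hε.memLp_epad_mul_epad _ _)
    (fun i hi j hj hij => by
      have := hs hi hj hij
      have := hs hj hi hij.symm
      exact hε.indepFun_epad_mul_epad (by omega) (by omega) (by omega) (by omega))
    fun i _ => hε.variance_epad_mul_epad_le _ _

lemma variance_sum_epad_mul_epad_le (hε : IsIIDGaussian P ε v) (n l : ℕ) :
    Var[fun ω => ∑ i ∈ Finset.range n, epad N ε ω i * epad N ε ω (i + l); P]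
      ≤ 6 * n * (v : ℝ) ^ 2 := by
  have := hε.isProbabilityMeasure
  set Z : ℕ → Ω → ℝ := fun i ω => epad N ε ω i * epad N ε ω (i + l)
  set s₀ := (Finset.range n).filter fun i => Even (i / l)
  set s₁ := (Finset.range n).filter fun i => ¬Even (i / l)
  have hsplit : (fun ω => ∑ i ∈ Finset.range n, Z i ω) = ∑ i ∈ s₀, Z i + ∑ i ∈ s₁, Z i := by
    ext ω
    simp only [Pi.add_apply, Finset.sum_apply]
    exact (Finset.sum_filter_add_sum_filter_not _ _ _).symm
  have hcard : (s₀.card : ℝ) + s₁.card = n := by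
    exact_mod_cast (Finset.range n).card_filter_add_card_filter_not _ |>.trans
      (Finset.card_range n)
  have h₀ := hε.variance_sum_epad_mul_epad_le_of_pairwise (s := s₀) (l := l)
    fun i hi j hj hij => ne_add_of_even_div_iff hij
      (iff_of_true (Finset.mem_filter.1 hi).2 (Finset.mem_filter.1 hj).2)
  have h₁ := hε.variance_sum_epad_mul_epad_le_of_pairwise (s := s₁) (l := l)
    fun i hi j hj hij => ne_add_of_even_div_iff hij
      (iff_of_false (Finset.mem_filter.1 hi).2 (Finset.mem_filter.1 hj).2)
  calc Var[fun ω => ∑ i ∈ Finset.range n, Z i ω; P]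
      ≤ 2 * Var[∑ i ∈ s₀, Z i; P] + 2 * Var[∑ i ∈ s₁, Z i; P] := by
        rw [hsplit]
        exact variance_add_le (memLp_finsetSum' _ fun i _ => hε.memLp_epad_mul_epad _ _)
          (memLp_finsetSum' _ fun i _ => hε.memLp_epad_mul_epad _ _)
    _ ≤ 6 * n * (v : ℝ) ^ 2 := by
        rw [← hcard]
        linarith

lemma memLp_sum_mul_epad (hε : IsIIDGaussian P ε v) (b : ℕ → ℝ) (f : ℕ → ℤ) (s : Finset ℕ) :
    MemLp (fun ω => ∑ i ∈ s, b i * epad N ε ω (f i)) 2 P :=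
  memLp_finsetSum s fun i _ => (hε.memLp_epad (f i) (by simp)).const_mul (b i)

lemma variance_autocorrelation_sum_le (hε : IsIIDGaussian P ε v) (c : ℤ → ℝ) (n l : ℕ) :
    Var[fun ω => ∑ i ∈ Finset.range n,
        (c i + epad N ε ω i) * (c (i + l) + epad N ε ω (i + l)); P]
      ≤ 4 * v * (∑ i ∈ Finset.range n, c i ^ 2 + ∑ i ∈ Finset.range n, c (i + l) ^ 2)
        + 12 * n * (v : ℝ) ^ 2 := by
  have := hε.isProbabilityMeasure
  set Lin₁ := fun ω => ∑ i ∈ Finset.range n, c (i + l) * epad N ε ω i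
  set Lin₂ := fun ω => ∑ i ∈ Finset.range n, c i * epad N ε ω (i + l)
  set Q := fun ω => ∑ i ∈ Finset.range n, epad N ε ω i * epad N ε ω (i + l)
  have hdecomp : (fun ω => ∑ i ∈ Finset.range n,
      (c i + epad N ε ω i) * (c (i + l) + epad N ε ω (i + l)))
      = fun ω => ∑ i ∈ Finset.range n, c i * c (i + l) + (Lin₁ + Lin₂ + Q) ω := by
    ext ω
    simp only [Pi.add_apply, Lin₁, Lin₂, Q, ← Finset.sum_add_distrib]
    exact Finset.sum_congr rfl fun i _ => by ring
  have hLin₁ : Var[Lin₁; P] ≤ v * ∑ i ∈ Finset.range n, c (i + l) ^ 2 :=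
    hε.variance_sum_mul_epad_le _ Nat.cast_injective _
  have hLin₂ : Var[Lin₂; P] ≤ v * ∑ i ∈ Finset.range n, c i ^ 2 :=
    hε.variance_sum_mul_epad_le _ (fun i j h => by simpa using h) _
  have hQ : Var[Q; P] ≤ 6 * n * (v : ℝ) ^ 2 := hε.variance_sum_epad_mul_epad_le n l
  have hm₁ := hε.memLp_sum_mul_epad (fun i => c (i + l)) Nat.cast (Finset.range n)
  have hm₂ := hε.memLp_sum_mul_epad (fun i => c i) (fun i => (i : ℤ) + l) (Finset.range n)
  have hmQ : MemLp Q 2 P :=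
    memLp_finsetSum _ fun i _ => hε.memLp_epad_mul_epad i (i + l)
  rw [hdecomp, variance_const_add ((hm₁.add hm₂).add hmQ).aestronglyMeasurable]
  calc Var[Lin₁ + Lin₂ + Q; P] ≤ 2 * Var[Lin₁ + Lin₂; P] + 2 * Var[Q; P] :=
        variance_add_le (hm₁.add hm₂) hmQ
    _ ≤ 2 * (2 * Var[Lin₁; P] + 2 * Var[Lin₂; P]) + 2 * Var[Q; P] := by
        gcongr
        exact variance_add_le hm₁ hm₂
    _ ≤ _ := by linarith

end IsIIDGaussian

end PaddedNoise

section Convolution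

variable {L M : ℕ} {x : ℕ → ℝ} {p : Fin M → ℕ}

lemma add_le_of_lt_of_forall_add_le_succ
    (hsep : ∀ k : ℕ, ∀ hk : k + 1 < M, p ⟨k, Nat.lt_of_succ_lt hk⟩ + L ≤ p ⟨k + 1, hk⟩)
    {a b : Fin M} (hab : a < b) : p a + L ≤ p b := by
  obtain ⟨a, ha⟩ := a
  obtain ⟨b, hb⟩ := b
  rw [Fin.mk_lt_mk] at hab
  induction b with
  | zero => omega
  | succ b ih =>
    have hstep := hsep b hb
    rcases Nat.lt_succ_iff_lt_or_eq.1 hab with hlt | rfl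
    · have := ih (by omega) hlt
      omega
    · exact hstep

lemma zpad_eq_zero {m : ℕ} (z : ℕ → ℝ) {i : ℤ} (h : ¬(0 ≤ i ∧ i < m)) : zpad m z i = 0 :=
  if_neg h

lemma zpad_sub_mul_zpad_sub_eq_zero {m : ℕ} (z : ℕ → ℝ) {a b : ℤ} (hab : a + m ≤ b) (i : ℤ) :
    zpad m z (i - a) * zpad m z (i - b) = 0 := by
  by_cases h : i - a < m
  · rw [zpad_eq_zero z (by omega : ¬(0 ≤ i - b ∧ i - b < m)), mul_zero]
  · rw [zpad_eq_zero z (by omega : ¬(0 ≤ i - a ∧ i - a < m)), zero_mul]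

lemma sconv_sq (hsep : ∀ a b : Fin M, a < b → p a + L ≤ p b) (i : ℤ) :
    sconv L M x p i ^ 2 = ∑ k : Fin M, zpad L x (i - p k) ^ 2 := by
  rw [sconv, sq, Finset.sum_mul_sum]
  refine Finset.sum_congr rfl fun k _ => ?_
  rw [Finset.sum_eq_single k _ (by simp), sq]
  intro k' _ hk'
  rcases lt_or_gt_of_ne hk' with h | h
  · rw [mul_comm]
    exact zpad_sub_mul_zpad_sub_eq_zero x (by exact_mod_cast hsep k' k h) i
  · exact zpad_sub_mul_zpad_sub_eq_zero x (by exact_mod_cast hsep k k' h) i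

lemma sum_zpad_sub_sq_le {m : ℕ} (z : ℕ → ℝ) (s : Finset ℤ) (a : ℤ) :
    ∑ i ∈ s, zpad m z (i - a) ^ 2 ≤ ∑ t ∈ Finset.range m, z t ^ 2 := by
  have hsub : s.filter (fun i => zpad m z (i - a) ^ 2 ≠ 0)
      ⊆ (Finset.range m).image fun t : ℕ => a + t := by
    intro i hi
    have hwin : 0 ≤ i - a ∧ i - a < m := by
      by_contra h
      exact (Finset.mem_filter.1 hi).2 (by rw [zpad_eq_zero z h]; ring)
    exact Finset.mem_image.2 ⟨(i - a).toNat, by simp; omega, by omega⟩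
  calc ∑ i ∈ s, zpad m z (i - a) ^ 2
      = ∑ i ∈ s.filter (fun i => zpad m z (i - a) ^ 2 ≠ 0), zpad m z (i - a) ^ 2 :=
        (Finset.sum_filter_ne_zero _).symm
    _ ≤ ∑ i ∈ (Finset.range m).image (fun t : ℕ => a + t), zpad m z (i - a) ^ 2 :=
        Finset.sum_le_sum_of_subset_of_nonneg hsub fun _ _ _ => sq_nonneg _
    _ = ∑ t ∈ Finset.range m, z t ^ 2 := by
        rw [Finset.sum_image fun t _ t' _ h => by simpa using h]
        refine Finset.sum_congr rfl fun t ht => ?_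
        simp [zpad, Finset.mem_range.1 ht]

lemma sum_sconv_sq_le (hsep : ∀ a b : Fin M, a < b → p a + L ≤ p b) {f : ℕ → ℤ}
    (hf : f.Injective) (s : Finset ℕ) :
    ∑ i ∈ s, sconv L M x p (f i) ^ 2 ≤ M * ∑ t ∈ Finset.range L, x t ^ 2 := by
  rw [← Finset.sum_image (f := fun i => sconv L M x p i ^ 2) hf.injOn,
    Finset.sum_congr rfl fun i _ => sconv_sq hsep i, Finset.sum_comm]
  calc ∑ k : Fin M, ∑ i ∈ s.image f, zpad L x (i - p k) ^ 2
      ≤ ∑ _k : Fin M, ∑ t ∈ Finset.range L, x t ^ 2 :=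
        Finset.sum_le_sum fun k _ => sum_zpad_sub_sq_le x _ _
    _ = M * ∑ t ∈ Finset.range L, x t ^ 2 := by simp

end Convolution

/-- Multi-target detection: there exist absolute constants `C₁, C₂ > 0` such that for every
instance of the model and every shift `0 ≤ l ≤ L−1`, the second-order autocorrelation
`a_y²[l] = (1/N) Σ_{i<N} y[i] y[i+l]` of the noisy measurement `y = s∗x + ε` (zero-padded),
with `ε[0], …, ε[N−1]` i.i.d. `N(0,σ²)`, satisfies
`Var(a_y²[l]) ≤ C₁ M ‖x‖₂² σ² / N² + C₂ σ⁴ / N`. -/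
theorem mtd_second_order_autocorrelation_variance :
    ∃ C₁ C₂ : ℝ, 0 < C₁ ∧ 0 < C₂ ∧
      ∀ (L N M : ℕ), 0 < L → L ≤ N → 2 ≤ M →
      ∀ (x : ℕ → ℝ) (p : Fin M → ℕ),
        (∀ k : ℕ, ∀ hk : k + 1 < M, p ⟨k, by omega⟩ + L ≤ p ⟨k + 1, hk⟩) →
        (∀ k : Fin M, p k + L ≤ N) →
      ∀ (Ω : Type) (_ : MeasurableSpace Ω) (P : Measure Ω), IsProbabilityMeasure P →
      ∀ σ : ℝ, 0 < σ →
      ∀ ε : Fin N → Ω → ℝ, (∀ i, Measurable (ε i)) →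
        iIndepFun ε P →
        (∀ i, Measure.map (ε i) P = gaussianReal 0 (Real.toNNReal (σ ^ 2))) →
      ∀ l : ℕ, l < L →
        variance (fun ω => (1 / (N : ℝ)) * ∑ i ∈ Finset.range N,
            (sconv L M x p i + epad N ε ω i) * (sconv L M x p (i + l) + epad N ε ω (i + l))) P
          ≤ C₁ * M * (∑ i ∈ Finset.range L, x i ^ 2) * σ ^ 2 / (N : ℝ) ^ 2
            + C₂ * σ ^ 4 / N := by
  refine ⟨8, 12, by norm_num, by norm_num, ?_⟩
  intro L N M hL hLN _ x p hsep _ Ω _ P _ σ _ ε hmeas hindep hmap l _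
  have hε : IsIIDGaussian P ε (σ ^ 2).toNNReal := ⟨hmeas, hindep, hmap⟩
  have hv : ((σ ^ 2).toNNReal : ℝ) = σ ^ 2 := Real.coe_toNNReal _ (sq_nonneg σ)
  have hsep' : ∀ a b : Fin M, a < b → p a + L ≤ p b :=
    fun a b => add_le_of_lt_of_forall_add_le_succ hsep
  have hS₁ := sum_sconv_sq_le (x := x) hsep' Nat.cast_injective (Finset.range N)
  have hS₂ := sum_sconv_sq_le (x := x) hsep' (f := fun i : ℕ => (i : ℤ) + l)
    (fun i j h => by simpa using h) (Finset.range N)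
  have hvar := hε.variance_autocorrelation_sum_le (sconv L M x p) N l
  rw [hv] at hvar
  have hN : (N : ℝ) ≠ 0 := by exact_mod_cast (by omega : N ≠ 0)
  rw [variance_const_mul]
  calc (1 / (N : ℝ)) ^ 2 * _
      ≤ (1 / (N : ℝ)) ^ 2 * (8 * M * (∑ i ∈ Finset.range L, x i ^ 2) * σ ^ 2
          + 12 * N * (σ ^ 2) ^ 2) := by
        gcongr
        nlinarith [sq_nonneg σ]
    _ = _ := by field_simp
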